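/- Let p be an odd prime, q = p^r, T = T(q). If u, v ∈ T with depths δ(u) = i and δ(v) = j, i > j, and gcd(i, p) = 1, then the commutator [u,v] has depth exactly qj + i. Consequently [T_i, T_j] ≤ T_{qj+i} when all elements of T_i have depth coprime to p exceeding the depths in T_j. -/

import Mathlib

/-!
Write `u = t + a t^(qi+1) + …` and `v = t + b t^(qj+1) + …`. In characteristic `p` we have
`v^q = t^q (1 + b^q t^(q²j) + …)`, hence `v^(qs+1) ≡ t^(qs) v + s b^q t^(qs+q²j+1)`.
Summing over the monomials `t^(qs+1)`, `s ≥ i`, of `u` gives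
`t·u(v) ≡ u·v + i a b^q t^(N+1) mod t^(N+2)` with `N = q(qj+i) + 1`, while in `t·v(u)` the
corresponding correction only appears beyond `t^(N+1)` because `i > j`. So
`u(v) - v(u) ≡ i a b^q t^N mod t^(N+1)`.

The commutator `c = [u,v]` satisfies `(v ∘ u)(c) = u ∘ v`, and for `F = t + …` the difference
`F(c) - F` agrees with `c - t` up to the first nonzero coefficient of `c - t`. Hence
`c = t + i a b^q t^N + …`, and `i a b^q ≠ 0` as `p ∤ i`.
-/

/-- Composition (substitution) of formal power series: `psComp f g = f(g(t))`. -/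
noncomputable def psComp {R : Type*} [CommRing R] (f g : PowerSeries R) : PowerSeries R :=
  PowerSeries.mk fun n =>
    ∑ k ∈ Finset.range (n + 1), PowerSeries.coeff (R := R) k f * PowerSeries.coeff (R := R) n (g ^ k)

/-- Membership in the Fesenko group `T(q)`: power series of the form
`t + Σ_{k≥1} a_{qk+1} t^{qk+1}` over `𝔽_p`. -/
def InT (p q : ℕ) (u : PowerSeries (ZMod p)) : Prop :=
  PowerSeries.coeff (R := ZMod p) 1 u = 1 ∧
  ∀ m : ℕ, m ≠ 1 → (¬ ∃ k, 1 ≤ k ∧ m = q * k + 1) → PowerSeries.coeff (R := ZMod p) m u = 0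

/-- `u ∈ T(q)` has depth `k`: the first nonzero coefficient `a_{qk+1}` occurs at index `k`. -/
def HasDepth (p q : ℕ) (u : PowerSeries (ZMod p)) (k : ℕ) : Prop :=
  1 ≤ k ∧ PowerSeries.coeff (R := ZMod p) (q * k + 1) u ≠ 0 ∧
  ∀ l, 1 ≤ l → l < k → PowerSeries.coeff (R := ZMod p) (q * l + 1) u = 0

open PowerSeries Finset

section Composition

variable {R : Type*} [CommRing R]

@[simp]
lemma coeff_psComp (f g : R⟦X⟧) (n : ℕ) :
    coeff n (psComp f g) = ∑ k ∈ range (n + 1), coeff k f * coeff n (g ^ k) :=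
  coeff_mk _ _

lemma constantCoeff_psComp (f g : R⟦X⟧) : constantCoeff (psComp f g) = constantCoeff f := by
  rw [← coeff_zero_eq_constantCoeff_apply, coeff_psComp]
  simp

lemma coeff_one_psComp (f g : R⟦X⟧) : coeff 1 (psComp f g) = coeff 1 f * coeff 1 g := by
  simp [sum_range_succ, coeff_one]

lemma coeff_pow_of_lt {g : R⟦X⟧} (hg : constantCoeff g = 0) {m k : ℕ} (h : m < k) :
    coeff m (g ^ k) = 0 :=
  X_pow_dvd_iff.mp (pow_dvd_pow_of_dvd (X_dvd_iff.mpr hg) k) m h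

lemma psComp_eq_subst (f : R⟦X⟧) {g : R⟦X⟧} (hg : constantCoeff g = 0) :
    psComp f g = f.subst g := by
  ext n
  rw [coeff_subst' (HasSubst.of_constantCoeff_zero' hg), coeff_psComp,
    finsum_eq_sum_of_support_subset (s := range (n + 1))]
  · simp only [smul_eq_mul]
  · intro k hk
    by_contra hkn
    simp only [coe_range, Set.mem_Iio, not_lt] at hkn
    exact hk (by simp [coeff_pow_of_lt hg (Nat.lt_of_succ_le hkn)])

lemma psComp_X_right (f : R⟦X⟧) : psComp f X = f := by
  rw [psComp_eq_subst f constantCoeff_X, X_subst]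

lemma psComp_X_left {g : R⟦X⟧} (hg : constantCoeff g = 0) : psComp X g = g := by
  rw [psComp_eq_subst X hg, subst_X (HasSubst.of_constantCoeff_zero' hg)]

lemma psComp_assoc (f : R⟦X⟧) {g h : R⟦X⟧} (hg : constantCoeff g = 0)
    (hh : constantCoeff h = 0) : psComp (psComp f g) h = psComp f (psComp g h) := by
  have hgh : constantCoeff (psComp g h) = 0 := by rw [constantCoeff_psComp, hg]
  rw [psComp_eq_subst _ hh, psComp_eq_subst _ hgh, psComp_eq_subst _ hg, psComp_eq_subst _ hh,
    subst_comp_subst_apply (HasSubst.of_constantCoeff_zero' hg)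
      (HasSubst.of_constantCoeff_zero' hh)]

lemma psComp_psComp_of_psComp_eq_X {u u' Z : R⟦X⟧}
    (h : psComp u u' = X) (hu' : constantCoeff u' = 0) (hZ : constantCoeff Z = 0) :
    psComp u (psComp u' Z) = Z := by
  rw [← psComp_assoc u hu' hZ, h, psComp_X_left hZ]

lemma psComp_psComp_commutator {u v u' v' : R⟦X⟧}
    (hu : constantCoeff u = 0) (hv : constantCoeff v = 0) (hu' : psComp u u' = X)
    (hv' : psComp v v' = X) (hu'0 : constantCoeff u' = 0) (hv'0 : constantCoeff v' = 0) :
    psComp (psComp v u) (psComp (psComp (psComp u' v') u) v) = psComp u v := by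
  have huv : constantCoeff (psComp u v) = 0 := by rw [constantCoeff_psComp, hu]
  have hv'uv : constantCoeff (psComp v' (psComp u v)) = 0 := by rw [constantCoeff_psComp, hv'0]
  rw [psComp_assoc _ hu hv, psComp_assoc _ hv'0 huv,
    psComp_assoc _ hu (by rw [constantCoeff_psComp, hu'0]),
    psComp_psComp_of_psComp_eq_X hu' hu'0 hv'uv, psComp_psComp_of_psComp_eq_X hv' hv'0 huv]

lemma X_pow_dvd_psComp_sub_sum (f : R⟦X⟧) {g : R⟦X⟧} (hg : constantCoeff g = 0) (N : ℕ) :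
    X ^ N ∣ psComp f g - ∑ k ∈ range N, C (coeff k f) * g ^ k := by
  refine X_pow_dvd_iff.mpr fun m hm => ?_
  rw [map_sub, coeff_psComp, map_sum, sub_eq_zero]
  simp only [coeff_C_mul]
  refine sum_subset (range_subset_range.mpr hm) fun k hkN hkm => ?_
  rw [coeff_pow_of_lt hg (by simpa using hkm), mul_zero]

lemma X_pow_succ_dvd_psComp_sub (F : R⟦X⟧) {c : R⟦X⟧} {m : ℕ} (hm : 1 ≤ m)
    (hc : X ^ m ∣ c - X) : X ^ (m + 1) ∣ psComp F c - F - C (coeff 1 F) * (c - X) := by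
  obtain ⟨E, hE⟩ := hc
  obtain ⟨n, rfl⟩ := Nat.exists_eq_add_of_le' hm
  have hc : c = X * (1 + X ^ n * E) := by linear_combination hE
  have hc0 : constantCoeff c = 0 := by simp [hc]
  have hterm : ∀ k ∈ range (n + 2), X ^ (n + 2) ∣
      C (coeff k F) * c ^ k - C (coeff k F) * X ^ k -
        if k = 1 then C (coeff k F) * (c - X) else 0 := by
    intro k _
    split_ifs with hk
    · subst hk
      exact ⟨0, by ring⟩
    obtain ⟨G, hG⟩ := sub_dvd_pow_sub_pow (1 + X ^ n * E) 1 k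
    rcases Nat.lt_or_ge k 2 with hk2 | hk2
    · obtain rfl : k = 0 := by omega
      simp
    obtain ⟨l, rfl⟩ := Nat.exists_eq_add_of_le' hk2
    refine ⟨C (coeff (l + 2) F) * X ^ l * E * G, ?_⟩
    rw [one_pow] at hG
    rw [sub_zero, hc, mul_pow]
    linear_combination C (coeff (l + 2) F) * X ^ (l + 2) * hG
  have hsum := dvd_sum hterm
  simp only [sum_sub_distrib, sum_ite_eq', mem_range, if_pos (show 1 < n + 2 by omega)] at hsum
  have hcomp := X_pow_dvd_psComp_sub_sum F hc0 (n + 2)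
  have hself := X_pow_dvd_psComp_sub_sum F constantCoeff_X (n + 2)
  rw [psComp_X_right] at hself
  convert (hcomp.sub hself).add hsum using 1
  ring

lemma X_pow_dvd_sub_X_of_X_pow_dvd_psComp_sub {F c : R⟦X⟧} (hF : coeff 1 F = 1)
    (hc : constantCoeff c = 0) {N : ℕ} (hN : 1 ≤ N) (a : R)
    (h : X ^ (N + 1) ∣ psComp F c - F - C a * X ^ N) : X ^ (N + 1) ∣ c - X - C a * X ^ N := by
  have hstep : ∀ m, 1 ≤ m → X ^ m ∣ c - X → X ^ (m + 1) ∣ psComp F c - F - (c - X) := by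
    intro m hm hcm
    simpa [hF] using X_pow_succ_dvd_psComp_sub F hm hcm
  have hlow : ∀ m, 1 ≤ m → m ≤ N → X ^ m ∣ c - X := by
    intro m hm
    induction m, hm using Nat.le_induction with
    | base => exact fun _ => by simpa [X_dvd_iff] using hc
    | succ m hm ih =>
      intro hmN
      have h' : X ^ (m + 1) ∣ psComp F c - F := by
        simpa using (dvd_trans (pow_dvd_pow X (by omega)) h).add
          (dvd_mul_of_dvd_right (pow_dvd_pow X hmN) (C a))
      simpa using h'.sub (hstep m hm (ih (by omega)))
  simpa using h.sub (hstep N hN (hlow N hN le_rfl))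

end Composition

section ExpChar

variable {R : Type*} [CommRing R] {p : ℕ} [ExpChar R p]

lemma coeff_eq_constantCoeff_of_sub_X_eq {w W : R⟦X⟧} {e : ℕ} (he : 1 ≤ e)
    (hW : w - X = X ^ (e + 1) * W) : coeff (e + 1) w = constantCoeff W := by
  have := congrArg (coeff (e + 1)) hW
  rwa [map_sub, coeff_X, if_neg (by omega), sub_zero, coeff_X_pow_mul', if_pos le_rfl,
    Nat.sub_self, coeff_zero_eq_constantCoeff_apply] at this

lemma X_pow_dvd_pow_mul_add_one_sub {w : R⟦X⟧} {e : ℕ} (he : 1 ≤ e)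
    (hw : X ^ (e + 1) ∣ w - X) {q r : ℕ} (hq : q = p ^ r) (s : ℕ) :
    X ^ (q * s + q * e + 2) ∣ w ^ (q * s + 1) - X ^ (q * s) * w -
      C (s * coeff (e + 1) w ^ q) * X ^ (q * s + q * e + 1) := by
  have : ExpChar R⟦X⟧ p := expChar_of_injective_algebraMap C_injective p
  obtain ⟨W, hW⟩ := hw
  rw [coeff_eq_constantCoeff_of_sub_X_eq he hW]
  have hw : w = X * (1 + X ^ e * W) := by linear_combination hW
  obtain ⟨t, ht⟩ : ∃ t, q * e = t + 1 := ⟨q * e - 1, by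
    have : 0 < q := hq ▸ pow_pos (expChar_pos R p) r
    have : 0 < q * e := by positivity
    omega⟩
  have hwq : w ^ q = X ^ q * (1 + X ^ (t + 1) * W ^ q) := by
    rw [hw, mul_pow, ← ht, hq, add_pow_expChar_pow, one_pow, mul_pow, ← pow_mul, mul_comm e]
  obtain ⟨A, hA⟩ : (X ^ (t + 1) * W ^ q) ^ 2 ∣
      (1 + X ^ (t + 1) * W ^ q) ^ s - 1 - (s : R⟦X⟧) * (X ^ (t + 1) * W ^ q) := by
    convert sq_dvd_add_pow_sub_sub (X ^ (t + 1) * W ^ q) 1 s using 1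
    simp only [one_pow]
    ring
  obtain ⟨B, hB⟩ :
      X ∣ (s : R⟦X⟧) * W ^ q * (1 + X ^ e * W) - C (s * constantCoeff W ^ q) := by
    rw [X_dvd_iff]
    simp [zero_pow (by omega : e ≠ 0)]
  have hpow : w ^ (q * s + 1) = X ^ (q * s) * (1 + X ^ (t + 1) * W ^ q) ^ s * w := by
    rw [pow_succ, pow_mul, hwq, mul_pow, ← pow_mul]
  refine ⟨X ^ t * (1 + X ^ e * W) * W ^ (2 * q) * A + B, ?_⟩
  rw [hpow, ht, hw]
  linear_combination (X ^ (q * s) * (X * (1 + X ^ e * W))) * hA + X ^ (q * s + t + 2) * hB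

lemma X_pow_dvd_X_mul_pow_sub {w : R⟦X⟧} {e : ℕ} (he : 1 ≤ e) (hw : X ^ (e + 1) ∣ w - X)
    {q r : ℕ} (hq : q = p ^ r) {I k : ℕ} (hI : 1 ≤ I)
    (hk : k = 1 ∨ ∃ s, I ≤ s ∧ k = q * s + 1) :
    X ^ (q * I + q * e + 3) ∣ X * w ^ k - X ^ k * w -
      if k = q * I + 1 then C (I * coeff (e + 1) w ^ q) * X ^ (q * I + q * e + 2) else 0 := by
  have hq0 : 0 < q := hq ▸ pow_pos (expChar_pos R p) r
  rcases hk with rfl | ⟨s, hs, rfl⟩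
  · rw [if_neg (by nlinarith)]
    simp
  obtain ⟨c, hc⟩ := X_pow_dvd_pow_mul_add_one_sub he hw hq s
  rcases hs.eq_or_lt with rfl | hlt
  · rw [if_pos rfl]
    exact ⟨c, by linear_combination X * hc⟩
  · rw [if_neg (by nlinarith)]
    have : q * (I + 1) ≤ q * s := Nat.mul_le_mul_left q hlt
    obtain ⟨d, hd⟩ : ∃ d, q * s = q * I + 1 + d :=
      ⟨q * s - (q * I + 1), by rw [Nat.mul_succ] at this; omega⟩
    refine ⟨X ^ (d + 1) * c + C (s * coeff (e + 1) w ^ q) * X ^ d, ?_⟩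
    rw [hd] at hc ⊢
    linear_combination X * hc

lemma X_pow_dvd_X_mul_psComp_sub_mul {w g : R⟦X⟧} {e : ℕ} (he : 1 ≤ e)
    (hw : X ^ (e + 1) ∣ w - X) {q r : ℕ} (hq : q = p ^ r) {I : ℕ} (hI : 1 ≤ I)
    (hg : ∀ k, coeff k g ≠ 0 → k = 1 ∨ ∃ s, I ≤ s ∧ k = q * s + 1) :
    X ^ (q * I + q * e + 3) ∣ X * psComp g w - g * w -
      C (I * coeff (q * I + 1) g * coeff (e + 1) w ^ q) * X ^ (q * I + q * e + 2) := by
  set N := q * I + q * e + 2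
  have hw0 : constantCoeff w = 0 := by
    simpa using X_dvd_iff.mp (dvd_trans (dvd_pow_self X (Nat.succ_ne_zero e)) hw)
  have hcomp := X_pow_dvd_psComp_sub_sum g hw0 N
  have hself := X_pow_dvd_psComp_sub_sum g constantCoeff_X N
  rw [psComp_X_right] at hself
  have hterm : ∀ k ∈ range N, X ^ (N + 1) ∣
      X * (C (coeff k g) * w ^ k) - C (coeff k g) * X ^ k * w -
        if k = q * I + 1 then C (coeff k g) * C (I * coeff (e + 1) w ^ q) * X ^ N else 0 := by
    intro k _
    by_cases hk : coeff k g = 0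
    · simp [hk]
    obtain ⟨c, hc⟩ := X_pow_dvd_X_mul_pow_sub he hw hq hI (hg k hk)
    refine ⟨C (coeff k g) * c, ?_⟩
    split_ifs at hc ⊢ <;> linear_combination C (coeff k g) * hc
  have hsum := dvd_sum hterm
  simp only [sum_sub_distrib, ← mul_sum, ← sum_mul, sum_ite_eq', mem_range,
    if_pos (show q * I + 1 < N by omega)] at hsum
  obtain ⟨a, ha⟩ := hcomp
  obtain ⟨b, hb⟩ := hself
  obtain ⟨c, hc⟩ := hsum
  obtain ⟨v, hv⟩ := X_dvd_iff.mpr hw0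
  refine ⟨a - v * b + c, ?_⟩
  simp only [map_mul, map_natCast] at hc ⊢
  linear_combination X * ha - w * hb + hc - X ^ N * b * hv

lemma X_pow_dvd_sub_X {u : R⟦X⟧} {q I : ℕ} (hu1 : coeff 1 u = 1)
    (hu : ∀ k, coeff k u ≠ 0 → k = 1 ∨ ∃ s, I ≤ s ∧ k = q * s + 1) :
    X ^ (q * I + 1) ∣ u - X := by
  refine X_pow_dvd_iff.mpr fun m hm => ?_
  rw [map_sub, coeff_X]
  split_ifs with h
  · rw [h, hu1, sub_self]
  · rw [sub_zero]
    by_contra hne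
    rcases hu m hne with h' | ⟨s, hs, rfl⟩
    · exact h h'
    · have := Nat.mul_le_mul_left q hs
      omega

lemma X_pow_dvd_psComp_sub_psComp {q r : ℕ} (hq : q = p ^ r) (hq1 : 1 < q) {u v : R⟦X⟧}
    {i j : ℕ} (hj : 1 ≤ j) (hij : j < i) (hu1 : coeff 1 u = 1) (hv1 : coeff 1 v = 1)
    (hu : ∀ k, coeff k u ≠ 0 → k = 1 ∨ ∃ s, i ≤ s ∧ k = q * s + 1)
    (hv : ∀ k, coeff k v ≠ 0 → k = 1 ∨ ∃ s, j ≤ s ∧ k = q * s + 1) :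
    X ^ (q * (q * j + i) + 2) ∣ psComp u v - psComp v u -
      C (i * coeff (q * i + 1) u * coeff (q * j + 1) v ^ q) * X ^ (q * (q * j + i) + 1) := by
  have hqj : 1 ≤ q * j := Nat.mul_pos (by omega) hj
  have hqi : 1 ≤ q * i := Nat.mul_pos (by omega) (by omega)
  obtain ⟨a, ha⟩ := X_pow_dvd_X_mul_psComp_sub_mul hqj (X_pow_dvd_sub_X hv1 hv) hq (by omega) hu
  obtain ⟨b, hb⟩ := X_pow_dvd_X_mul_psComp_sub_mul hqi (X_pow_dvd_sub_X hu1 hu) hq hj hv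
  have hgap : q * i + q * (q * j) + 3 ≤ q * j + q * (q * i) + 2 := by
    obtain ⟨d, rfl⟩ := Nat.exists_eq_add_of_lt hij
    nlinarith [Nat.mul_le_mul_left (q * (d + 1)) hq1]
  obtain ⟨g, hg⟩ := Nat.exists_eq_add_of_le hgap
  rw [show q * j + q * (q * i) + 3 = q * i + q * (q * j) + 3 + g + 1 by omega, hg] at hb
  refine ⟨a - X ^ g * (X * b + C (j * coeff (q * j + 1) v * coeff (q * i + 1) u ^ q)),
    X_mul_cancel ?_⟩
  linear_combination ha - hb

end ExpChar

section Depth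

variable {p q : ℕ}

lemma InT.eq_one_or_exists_of_coeff_ne_zero {u : (ZMod p)⟦X⟧} {i : ℕ} (hu : InT p q u)
    (hd : HasDepth p q u i) :
    ∀ k, coeff k u ≠ 0 → k = 1 ∨ ∃ s, i ≤ s ∧ k = q * s + 1 := by
  intro k hk
  by_contra! h
  refine hk (hu.2 k h.1 fun ⟨s, hs, hks⟩ => ?_)
  rcases Nat.lt_or_ge s i with hsi | hsi
  · exact hk (hks ▸ hd.2.2 s hs hsi)
  · exact h.2 s hsi hks

lemma hasDepth_of_X_pow_dvd {c : (ZMod p)⟦X⟧} {k : ℕ} (hq : 0 < q) (hk : 1 ≤ k) {a : ZMod p}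
    (ha : a ≠ 0) (h : X ^ (q * k + 2) ∣ c - X - C a * X ^ (q * k + 1)) : HasDepth p q c k := by
  have hc := X_pow_dvd_iff.mp h
  have hqk : q ≤ q * k := Nat.le_mul_of_pos_right q hk
  refine ⟨hk, ?_, fun l hl hlk => ?_⟩
  · have := hc (q * k + 1) (by omega)
    simp only [map_sub, coeff_X, coeff_C_mul_X_pow, if_neg (show q * k + 1 ≠ 1 by omega),
      sub_zero, sub_eq_zero] at this
    rwa [this]
  · have hql : q * l < q * k := Nat.mul_lt_mul_of_pos_left hlk hq
    have := hc (q * l + 1) (by omega)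
    have hql1 : q ≤ q * l := Nat.le_mul_of_pos_right q hl
    simpa only [map_sub, coeff_X, coeff_C_mul_X_pow, if_neg (show q * l + 1 ≠ 1 by omega),
      if_neg (show q * l + 1 ≠ q * k + 1 by omega), sub_zero] using this

end Depth

theorem stmt_9_general (p r : ℕ) (hp : p.Prime) (hr : 1 ≤ r) (q : ℕ) (hq : q = p ^ r)
    (u v : PowerSeries (ZMod p)) (hu : InT p q u) (hv : InT p q v)
    (i j : ℕ) (hdu : HasDepth p q u i) (hdv : HasDepth p q v j)
    (hij : j < i) (hip : Nat.gcd i p = 1)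
    -- u', v' are the compositional inverses of u, v
    (u' v' : PowerSeries (ZMod p))
    (hu' : psComp u u' = PowerSeries.X ∧ psComp u' u = PowerSeries.X)
    (hv' : psComp v v' = PowerSeries.X ∧ psComp v' v = PowerSeries.X) :
    -- the commutator [u,v] = u⁻¹ ∘ v⁻¹ ∘ u ∘ v has depth exactly qj + i
    HasDepth p q (psComp (psComp (psComp u' v') u) v) (q * j + i) := by
  have : Fact p.Prime := ⟨hp⟩
  have hq1 : 1 < q := hq ▸ Nat.one_lt_pow (by omega) hp.one_lt
  have hu0 : constantCoeff u = 0 := by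
    simpa using hu.2 0 (by omega) fun ⟨_, _, h⟩ => by omega
  have hv0 : constantCoeff v = 0 := by
    simpa using hv.2 0 (by omega) fun ⟨_, _, h⟩ => by omega
  have hu'0 : constantCoeff u' = 0 := by
    simpa [constantCoeff_psComp] using congrArg constantCoeff hu'.2
  have hv'0 : constantCoeff v' = 0 := by
    simpa [constantCoeff_psComp] using congrArg constantCoeff hv'.2
  have hi : (i : ZMod p) ≠ 0 := by
    rw [Ne, ZMod.natCast_eq_zero_iff]
    exact hp.coprime_iff_not_dvd.mp (Nat.Coprime.symm hip)
  have hE := X_pow_dvd_psComp_sub_psComp hq hq1 hdv.1 hij hu.1 hv.1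
    (hu.eq_one_or_exists_of_coeff_ne_zero hdu) (hv.eq_one_or_exists_of_coeff_ne_zero hdv)
  rw [← psComp_psComp_commutator hu0 hv0 hu'.1 hv'.1 hu'0 hv'0] at hE
  refine hasDepth_of_X_pow_dvd (by omega) (by omega)
    (mul_ne_zero (mul_ne_zero hi hdu.2.1) (pow_ne_zero q hdv.2.1))
    (X_pow_dvd_sub_X_of_X_pow_dvd_psComp_sub ?_ ?_ (by omega) _ hE)
  · rw [coeff_one_psComp, hv.1, hu.1, one_mul]
  · simp [constantCoeff_psComp, hu'0]

theorem stmt_9 (p r : ℕ) (hp : p.Prime) (hpodd : Odd p) (hr : 1 ≤ r) (q : ℕ) (hq : q = p ^ r)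
    (u v : PowerSeries (ZMod p)) (hu : InT p q u) (hv : InT p q v)
    (i j : ℕ) (hdu : HasDepth p q u i) (hdv : HasDepth p q v j)
    (hij : j < i) (hip : Nat.gcd i p = 1)
    -- u', v' are the compositional inverses of u, v
    (u' v' : PowerSeries (ZMod p))
    (hu' : psComp u u' = PowerSeries.X ∧ psComp u' u = PowerSeries.X)
    (hv' : psComp v v' = PowerSeries.X ∧ psComp v' v = PowerSeries.X) :
    -- the commutator [u,v] = u⁻¹ ∘ v⁻¹ ∘ u ∘ v has depth exactly qj + i
    HasDepth p q (psComp (psComp (psComp u' v') u) v) (q * j + i) :=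
  stmt_9_general p r hp hr q hq u v hu hv i j hdu hdv hij hip u' v' hu' hv'
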